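/- (Corollary 2, linearity of the value function.) Suppose the rewards are induced by state-dependent rewards: there are functions R_T : S → ℝ and R_t : S × A → ℝ for t = 0, …, T−1 such that ρ_T(b) = Σ_s b(s) · R_T(s) and ρ_t(b, a) = Σ_s b(s) · R_t(s, a) for all beliefs b. Then for every t ∈ {0, …, T−1} and every node q ∈ Q_t there exists a function α_{t,q} : S → ℝ such that V_t(b, q) = Σ_s b(s) · α_{t,q}(s) for all b ∈ Δ(S); i.e., each value function V_t(·, q) is linear in the belief. -/

import Mathlib

/-! The Bayes update divides by `η(b, z)` and the recursion multiplies by it again, so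
`η(b, z) · ⟨ζ(b, z), α⟩ = Σ_s b(s) Σ_{s'} Ps(s, s') Pz(s', z) α(s')` is linear in `b`. By backward
induction each `V_t(·, q)` is the pairing with the alpha vector
`α_{t,q}(s) = R_t(s, γ q) + Σ_z Σ_{s'} Ps(s, s') Pz(s', z) α_{t+1, λ(q, z)}(s')`.
The rewards are linear only on `Δ(S)`, so the induction also needs `η > 0` and `ζ(b, z) ∈ Δ(S)`,
which come from the positivity of the observation kernel. -/

/-- The standard probability simplex Δ(S) of beliefs over a finite state set `S`. -/
def simplex (S : Type*) [Fintype S] : Set (S → ℝ) :=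
  {b | (∀ s, 0 ≤ b s) ∧ ∑ s, b s = 1}

/-- Observation likelihood `η(b, z)` for transition kernel `Ps` and observation kernel `Pz`. -/
noncomputable def eta {S Z : Type*} [Fintype S] (Ps : S → S → ℝ) (Pz : S → Z → ℝ)
    (b : S → ℝ) (z : Z) : ℝ :=
  ∑ s', Pz s' z * ∑ s, Ps s s' * b s

/-- Bayes posterior `ζ(b, z)` for transition kernel `Ps` and observation kernel `Pz`. -/
noncomputable def zeta {S Z : Type*} [Fintype S] (Ps : S → S → ℝ) (Pz : S → Z → ℝ)
    (b : S → ℝ) (z : Z) : S → ℝ :=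
  fun s' => Pz s' z * (∑ s, Ps s s' * b s) / eta Ps Pz b z

open Finset

section BeliefUpdate

variable {S Z : Type*} [Fintype S] (Ps : S → S → ℝ) (Pz : S → Z → ℝ)

lemma sum_sum_mul_eq_one_of_mem_simplex (hPs1 : ∀ s, ∑ s', Ps s s' = 1) {b : S → ℝ}
    (hb : b ∈ simplex S) : ∑ s', ∑ s, Ps s s' * b s = 1 := by
  simp only [sum_comm (γ := S), ← sum_mul, hPs1, one_mul, hb.2]

lemma eta_pos (hPs0 : ∀ s s', 0 ≤ Ps s s') (hPs1 : ∀ s, ∑ s', Ps s s' = 1)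
    (hPz0 : ∀ s' z, 0 < Pz s' z) {b : S → ℝ} (hb : b ∈ simplex S) (z : Z) :
    0 < eta Ps Pz b z := by
  have hpred_nonneg : ∀ s', 0 ≤ ∑ s, Ps s s' * b s := fun s' =>
    sum_nonneg fun s _ => mul_nonneg (hPs0 s s') (hb.1 s)
  obtain ⟨s', -, hs'⟩ : ∃ s' ∈ univ, (0 : ℝ) < ∑ s, Ps s s' * b s := by
    refine exists_lt_of_sum_lt ?_
    rw [sum_const_zero, sum_sum_mul_eq_one_of_mem_simplex Ps hPs1 hb]
    exact one_pos
  exact sum_pos' (fun x _ => mul_nonneg (hPz0 x z).le (hpred_nonneg x))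
    ⟨s', mem_univ s', mul_pos (hPz0 s' z) hs'⟩

lemma zeta_mem_simplex (hPs0 : ∀ s s', 0 ≤ Ps s s') (hPs1 : ∀ s, ∑ s', Ps s s' = 1)
    (hPz0 : ∀ s' z, 0 < Pz s' z) {b : S → ℝ} (hb : b ∈ simplex S) (z : Z) :
    zeta Ps Pz b z ∈ simplex S := by
  have hη := eta_pos Ps Pz hPs0 hPs1 hPz0 hb z
  refine ⟨fun s' => div_nonneg ?_ hη.le, ?_⟩
  · exact mul_nonneg (hPz0 s' z).le (sum_nonneg fun s _ => mul_nonneg (hPs0 s s') (hb.1 s))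
  · simp only [zeta, ← sum_div]
    exact div_self hη.ne'

lemma eta_mul_zeta {b : S → ℝ} {z : Z} (hη : eta Ps Pz b z ≠ 0) (s' : S) :
    eta Ps Pz b z * zeta Ps Pz b z s' = Pz s' z * ∑ s, Ps s s' * b s :=
  mul_div_cancel₀ _ hη

lemma eta_mul_sum_zeta_mul {b : S → ℝ} {z : Z} (hη : eta Ps Pz b z ≠ 0) (α : S → ℝ) :
    eta Ps Pz b z * ∑ s', zeta Ps Pz b z s' * α s' =
      ∑ s, b s * ∑ s', Ps s s' * (Pz s' z * α s') := by
  simp only [mul_sum, ← mul_assoc, eta_mul_zeta Ps Pz hη, sum_mul]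
  rw [sum_comm]
  exact sum_congr rfl fun _ _ => sum_congr rfl fun _ _ => by ring

end BeliefUpdate

section AlphaVector

variable {S Z : Type*} [Fintype S] [Fintype Z] (Ps : S → S → ℝ) (Pz : S → Z → ℝ)

def alphaBackup (r : S → ℝ) (α : Z → S → ℝ) : S → ℝ :=
  fun s => r s + ∑ z, ∑ s', Ps s s' * (Pz s' z * α z s')

lemma backup_eq_sum_mul_alphaBackup (hPs0 : ∀ s s', 0 ≤ Ps s s')
    (hPs1 : ∀ s, ∑ s', Ps s s' = 1) (hPz0 : ∀ s' z, 0 < Pz s' z) {b : S → ℝ}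
    (hb : b ∈ simplex S) (r : S → ℝ) {f : Z → (S → ℝ) → ℝ} {α : Z → S → ℝ}
    (hf : ∀ z, ∀ b' ∈ simplex S, f z b' = ∑ s, b' s * α z s) :
    ∑ s, b s * r s + ∑ z, eta Ps Pz b z * f z (zeta Ps Pz b z) =
      ∑ s, b s * alphaBackup Ps Pz r α s := by
  have hobs : ∀ z, eta Ps Pz b z * f z (zeta Ps Pz b z) =
      ∑ s, b s * ∑ s', Ps s s' * (Pz s' z * α z s') := fun z => by
    rw [hf z _ (zeta_mem_simplex Ps Pz hPs0 hPs1 hPz0 hb z)]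
    exact eta_mul_sum_zeta_mul Ps Pz (eta_pos Ps Pz hPs0 hPs1 hPz0 hb z).ne' (α z)
  simp only [hobs]
  rw [sum_comm]
  simp only [alphaBackup, mul_add, sum_add_distrib, mul_sum]

end AlphaVector

theorem value_function_linear_of_state_dependent_rewards_general
    {S Z A : Type*} [Fintype S] [Fintype Z]
    (Ps : A → S → S → ℝ) (Pz : A → S → Z → ℝ)
    (hPs0 : ∀ a s s', 0 ≤ Ps a s s') (hPs1 : ∀ a s, ∑ s', Ps a s s' = 1)
    (hPz0 : ∀ a s' z, 0 < Pz a s' z)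
    (T : ℕ) (hT : 1 ≤ T)
    (Q : ℕ → Type)
    (γ : ∀ t, Q t → A) (lam : ∀ t, Q t → Z → Q (t + 1))
    (ρ : ℕ → (S → ℝ) → A → ℝ) (ρT : (S → ℝ) → ℝ)
    (RT : S → ℝ) (R : ℕ → S → A → ℝ)
    (hρT : ∀ b ∈ simplex S, ρT b = ∑ s, b s * RT s)
    (hρ : ∀ t < T, ∀ a : A, ∀ b ∈ simplex S, ρ t b a = ∑ s, b s * R t s a)
    (V : ∀ t, (S → ℝ) → Q t → ℝ)
    (hVlast : ∀ (b : S → ℝ) (q : Q (T - 1)),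
      V (T - 1) b q = ρ (T - 1) b (γ (T - 1) q) +
        ∑ z, eta (Ps (γ (T - 1) q)) (Pz (γ (T - 1) q)) b z *
          ρT (zeta (Ps (γ (T - 1) q)) (Pz (γ (T - 1) q)) b z))
    (hVstep : ∀ t, t < T - 1 → ∀ (b : S → ℝ) (q : Q t),
      V t b q = ρ t b (γ t q) +
        ∑ z, eta (Ps (γ t q)) (Pz (γ t q)) b z *
          V (t + 1) (zeta (Ps (γ t q)) (Pz (γ t q)) b z) (lam t q z)) :
    ∀ t < T, ∀ q : Q t, ∃ α : S → ℝ,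
      ∀ b ∈ simplex S, V t b q = ∑ s, b s * α s := by
  intro t htT
  have ht : t ≤ T - 1 := Nat.le_sub_one_of_lt htT
  clear htT
  induction ht using Nat.decreasingInduction with
  | self =>
    intro q
    refine ⟨alphaBackup (Ps (γ _ q)) (Pz (γ _ q)) (R (T - 1) · (γ _ q)) fun _ => RT,
      fun b hb => ?_⟩
    rw [hVlast, hρ _ (Nat.sub_one_lt_of_le hT le_rfl) _ b hb]
    exact backup_eq_sum_mul_alphaBackup _ _ (hPs0 _) (hPs1 _) (hPz0 _) hb _ fun _ => hρT
  | of_succ t ht ih =>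
    intro q
    choose α hα using fun z => ih (lam t q z)
    refine ⟨alphaBackup (Ps (γ t q)) (Pz (γ t q)) (R t · (γ t q)) α, fun b hb => ?_⟩
    rw [hVstep t ht, hρ t (by omega) _ b hb]
    exact backup_eq_sum_mul_alphaBackup _ _ (hPs0 _) (hPs1 _) (hPz0 _) hb _ hα

/-- **Corollary 2 (linearity of the value function).** If the rewards are induced by
state-dependent rewards `R_T : S → ℝ` and `R_t : S × A → ℝ`, then each value function
`V_t(·, q)` is a linear function of the belief on `Δ(S)`. -/
theorem value_function_linear_of_state_dependent_rewards
    {S Z A : Type*} [Fintype S] [Fintype Z] [Fintype A]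
    [Nonempty S] [Nonempty Z] [Nonempty A]
    (Ps : A → S → S → ℝ) (Pz : A → S → Z → ℝ)
    (hPs0 : ∀ a s s', 0 ≤ Ps a s s') (hPs1 : ∀ a s, ∑ s', Ps a s s' = 1)
    (hPz0 : ∀ a s' z, 0 < Pz a s' z) (hPz1 : ∀ a s', ∑ z, Pz a s' z = 1)
    (T : ℕ) (hT : 1 ≤ T)
    (Q : ℕ → Type) [∀ t, Nonempty (Q t)]
    (γ : ∀ t, Q t → A) (lam : ∀ t, Q t → Z → Q (t + 1))
    (ρ : ℕ → (S → ℝ) → A → ℝ) (ρT : (S → ℝ) → ℝ)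
    (RT : S → ℝ) (R : ℕ → S → A → ℝ)
    (hρT : ∀ b ∈ simplex S, ρT b = ∑ s, b s * RT s)
    (hρ : ∀ t < T, ∀ a : A, ∀ b ∈ simplex S, ρ t b a = ∑ s, b s * R t s a)
    (V : ∀ t, (S → ℝ) → Q t → ℝ)
    (hVlast : ∀ (b : S → ℝ) (q : Q (T - 1)),
      V (T - 1) b q = ρ (T - 1) b (γ (T - 1) q) +
        ∑ z, eta (Ps (γ (T - 1) q)) (Pz (γ (T - 1) q)) b z *
          ρT (zeta (Ps (γ (T - 1) q)) (Pz (γ (T - 1) q)) b z))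
    (hVstep : ∀ t, t < T - 1 → ∀ (b : S → ℝ) (q : Q t),
      V t b q = ρ t b (γ t q) +
        ∑ z, eta (Ps (γ t q)) (Pz (γ t q)) b z *
          V (t + 1) (zeta (Ps (γ t q)) (Pz (γ t q)) b z) (lam t q z)) :
    ∀ t < T, ∀ q : Q t, ∃ α : S → ℝ,
      ∀ b ∈ simplex S, V t b q = ∑ s, b s * α s :=
  value_function_linear_of_state_dependent_rewards_general Ps Pz hPs0 hPs1 hPz0 T hT Q γ lam ρ ρT RT
    R hρT hρ V hVlast hVstep
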